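/- If N = (p_1 p_2 ⋯ p_t)^{2a} = m^2 is a quasiperfect number (where p_1, ..., p_t are distinct primes and a is a positive integer), then 2a + 1 is divisible by 3. -/

import Mathlib

/-- A positive integer `N` is quasiperfect if `σ(N) = 2N + 1`. -/
def Quasiperfect (N : ℕ) : Prop :=
  0 < N ∧ ArithmeticFunction.sigma 1 N = 2 * N + 1

/-!
Since `N = m²`, every prime divisor of `σ(N) = 2m² + 1` has `-2` as a quadratic residue, hence is
`1` or `3` mod `8`, and so is every divisor of `σ(N)`, in particular each factor `σ(pᵢ^{2a})`.
This rules out `pᵢ = 2`, as `σ(2^{2a}) ≡ 7 (mod 8)`. For a modulus in which `pᵢ² ≡ 1`,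
`σ(pᵢ^{2a}) ≡ 1 + a(1 + pᵢ)`. Modulo `4` this forces `a` to be odd (otherwise
`σ(N) ≡ 1 ≢ 3 ≡ 2N + 1`), and then modulo `8` it rules out `pᵢ = 3`, as `σ(3^{2a}) ≡ 5`.
Hence `N ≡ 1 (mod 3)`, so `3` divides `σ(N)` and therefore some `σ(pᵢ^{2a}) ≡ 1 + a(1 + pᵢ)`,
which forces `pᵢ ≡ 1` and `3 ∣ 2a + 1`.
-/

open ArithmeticFunction Finset
open scoped ArithmeticFunction.sigma

lemma sigma_prod_prime_pow {ι : Type*} {s : Finset ι} {p : ι → ℕ}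
    (hp : ∀ i ∈ s, (p i).Prime) (hinj : Set.InjOn p s) (k : ℕ) (e : ι → ℕ) :
    σ k (∏ i ∈ s, p i ^ e i) = ∏ i ∈ s, σ k (p i ^ e i) :=
  isMultiplicative_sigma.map_prod _ s fun i hi j hj hij =>
    .pow _ _ <| (Nat.coprime_primes (hp i hi) (hp j hj)).mpr (hinj.ne hi hj hij)

lemma Nat.Prime.zmod_eight_of_dvd_two_mul_sq_add_one {q m : ℕ} (hq : q.Prime)
    (hdvd : q ∣ 2 * m ^ 2 + 1) : (q : ZMod 8) = 1 ∨ (q : ZMod 8) = 3 := by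
  have := Fact.mk hq
  have hq2 : q ≠ 2 := by rintro rfl; omega
  have h0 : (2 * m ^ 2 + 1 : ZMod q) = 0 := by
    exact_mod_cast (ZMod.natCast_eq_zero_iff _ _).mpr hdvd
  have hsq : IsSquare (-2 : ZMod q) := ⟨2 * m, by linear_combination (-2 : ZMod q) * h0⟩
  rcases (ZMod.exists_sq_eq_neg_two_iff hq2).mp hsq with h | h
  · left; rw [← ZMod.natCast_mod, h]; rfl
  · right; rw [← ZMod.natCast_mod, h]; rfl

lemma zmod_eight_of_dvd_two_mul_sq_add_one {d m : ℕ} (hdvd : d ∣ 2 * m ^ 2 + 1) :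
    (d : ZMod 8) = 1 ∨ (d : ZMod 8) = 3 := by
  induction d using Nat.recOnMul with
  | zero => omega
  | one => simp
  | prime q hq => exact hq.zmod_eight_of_dvd_two_mul_sq_add_one hdvd
  | mul b c hb hc =>
    rcases hb (dvd_of_mul_right_dvd hdvd) with h | h <;>
      rcases hc (dvd_of_mul_left_dvd hdvd) with h' | h' <;>
      simp only [Nat.cast_mul, h, h'] <;> decide

lemma geom_sum_two_mul_add_one_of_sq_eq_one {R : Type*} [Semiring R] {x : R} (hx : x ^ 2 = 1)
    (a : ℕ) : ∑ k ∈ range (2 * a + 1), x ^ k = 1 + a * (1 + x) := by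
  induction a with
  | zero => simp
  | succ a ih =>
    have hpow : x ^ (2 * a) = 1 := by rw [pow_mul, hx, one_pow]
    rw [show 2 * (a + 1) + 1 = 2 * a + 1 + 1 + 1 by ring, sum_range_succ, sum_range_succ, ih]
    simp only [pow_succ, hpow, one_mul, ← sq, hx, Nat.cast_succ, add_mul, one_mul]
    abel

lemma natCast_sigma_one_prime_pow_two_mul {R : Type*} [Semiring R] {q : ℕ} (hq : q.Prime)
    (h : (q : R) ^ 2 = 1) (a : ℕ) : (σ 1 (q ^ (2 * a)) : R) = 1 + a * (1 + q) := by
  rw [sigma_one_apply_prime_pow hq]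
  push_cast
  exact geom_sum_two_mul_add_one_of_sq_eq_one h a

lemma zmod_eight_sigma_one_two_pow {n : ℕ} (hn : 2 ≤ n) : (σ 1 (2 ^ n) : ZMod 8) = 7 := by
  obtain ⟨n, rfl⟩ := Nat.exists_eq_add_of_le hn
  rw [sigma_one_apply_prime_pow Nat.prime_two]
  push_cast
  rw [show 2 + n + 1 = 3 + n by ring, sum_range_add]
  simp only [pow_add, show (2 : ZMod 8) ^ 3 = 0 by decide, zero_mul, sum_const_zero, add_zero]
  decide

lemma zmod_eight_sigma_one_three_pow_of_odd {a : ℕ} (ha : Odd a) :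
    (σ 1 (3 ^ (2 * a)) : ZMod 8) = 5 := by
  obtain ⟨b, rfl⟩ := ha
  rw [natCast_sigma_one_prime_pow_two_mul Nat.prime_three (by decide)]
  push_cast
  generalize (b : ZMod 8) = x
  revert x
  decide

lemma zmod_four_sq_of_odd {x : ℕ} (hx : Odd x) : (x : ZMod 4) ^ 2 = 1 := by
  obtain ⟨k, rfl⟩ := hx
  push_cast
  generalize (k : ZMod 4) = y
  revert y
  decide

lemma zmod_four_sigma_one_prime_pow_of_even {q a : ℕ} (hq : q.Prime) (hodd : Odd q)
    (ha : Even a) : (σ 1 (q ^ (2 * a)) : ZMod 4) = 1 := by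
  rw [natCast_sigma_one_prime_pow_two_mul hq (zmod_four_sq_of_odd hodd)]
  obtain ⟨c, rfl⟩ := ha
  obtain ⟨d, rfl⟩ := hodd
  push_cast
  generalize (c : ZMod 4) = x
  generalize (d : ZMod 4) = y
  revert x y
  decide

lemma zmod_three_sq_of_not_dvd {x : ℕ} (hx : ¬ 3 ∣ x) : (x : ZMod 3) ^ 2 = 1 :=
  ZMod.pow_card_sub_one_eq_one (by rwa [ne_eq, ZMod.natCast_eq_zero_iff])

lemma three_dvd_of_three_dvd_sigma_one_prime_pow {q a : ℕ} (hq : q.Prime) (hq3 : ¬ 3 ∣ q)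
    (h : 3 ∣ σ 1 (q ^ (2 * a))) : 3 ∣ 2 * a + 1 := by
  rw [← ZMod.natCast_eq_zero_iff,
    natCast_sigma_one_prime_pow_two_mul hq (zmod_three_sq_of_not_dvd hq3)] at h
  rw [← ZMod.natCast_eq_zero_iff] at hq3 ⊢
  push_cast
  generalize (a : ZMod 3) = x at h ⊢
  generalize (q : ZMod 3) = y at h hq3
  revert x y
  decide

lemma natCast_prod_pow_two_mul_eq_one {R ι : Type*} [CommSemiring R] {s : Finset ι} {p : ι → ℕ}
    (hp : ∀ i ∈ s, (p i : R) ^ 2 = 1) (a : ℕ) : (((∏ i ∈ s, p i) ^ (2 * a) : ℕ) : R) = 1 := by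
  rw [← prod_pow]
  push_cast
  exact prod_eq_one fun i hi => by rw [pow_mul, hp i hi, one_pow]

/-- If `N = (p₁ p₂ ⋯ p_t)^{2a} = m²` is quasiperfect, then `3 ∣ 2a + 1`. -/
theorem stmt_3 (t : ℕ) (p : Fin t → ℕ) (a N m : ℕ)
    (hp : ∀ i, (p i).Prime) (hinj : Function.Injective p)
    (ha : 0 < a)
    (hN : N = (∏ i, p i) ^ (2 * a)) (hm : N = m ^ 2)
    (hq : Quasiperfect N) :
    3 ∣ 2 * a + 1 := by
  have hσN : 2 * N + 1 = ∏ i, σ 1 (p i ^ (2 * a)) := by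
    rw [← hq.2, hN, ← prod_pow, sigma_prod_prime_pow (fun i _ => hp i) hinj.injOn]
  have h8 (i : Fin t) : (σ 1 (p i ^ (2 * a)) : ZMod 8) = 1 ∨ (σ 1 (p i ^ (2 * a)) : ZMod 8) = 3 :=
    zmod_eight_of_dvd_two_mul_sq_add_one (hm ▸ hσN ▸ dvd_prod_of_mem _ (mem_univ i))
  have hp_odd (i : Fin t) : Odd (p i) := by
    refine (hp i).eq_two_or_odd'.resolve_left fun h2 => ?_
    have := h8 i
    rw [h2, zmod_eight_sigma_one_two_pow (by omega)] at this
    exact absurd this (by decide)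
  have ha_odd : Odd a := by
    refine Nat.not_even_iff_odd.mp fun ha_even => ?_
    have := congrArg (Nat.cast : ℕ → ZMod 4) hσN
    rw [Nat.cast_succ, Nat.cast_mul, Nat.cast_prod, hN,
      natCast_prod_pow_two_mul_eq_one (fun i _ => zmod_four_sq_of_odd (hp_odd i)),
      prod_eq_one fun i _ => zmod_four_sigma_one_prime_pow_of_even (hp i) (hp_odd i) ha_even]
      at this
    exact absurd this (by decide)
  have hp_three (i : Fin t) : ¬ 3 ∣ p i := by
    rw [Nat.prime_dvd_prime_iff_eq Nat.prime_three (hp i)]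
    intro h3
    have := h8 i
    rw [← h3, zmod_eight_sigma_one_three_pow_of_odd ha_odd] at this
    exact absurd this (by decide)
  have hN3 : 3 ∣ 2 * N + 1 := by
    rw [← ZMod.natCast_eq_zero_iff, Nat.cast_succ, Nat.cast_mul, hN,
      natCast_prod_pow_two_mul_eq_one fun i _ => zmod_three_sq_of_not_dvd (hp_three i)]
    decide
  obtain ⟨i, -, hi⟩ := (Nat.prime_three.prime.dvd_finsetProd_iff _).mp (hσN ▸ hN3)
  exact three_dvd_of_three_dvd_sigma_one_prime_pow (hp i) (hp_three i) hi
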